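/- Let x and p be binary relations on a type A with x a point. Then x ⊓ p^* = (x ⊓ 1) ⊔ ((x ⊓ p)∘(xᶜ ⊓ p)^*): reachability from the node x uses an edge starting in x at most in the first step and can omit such edges in all remaining steps. -/

import Mathlib

variable {A : Type*}

/-- Relational composition. -/
def rcomp (r s : A → A → Prop) : A → A → Prop := fun a c => ∃ b, r a b ∧ s b c

/-- Relational converse (transposition). -/
def rconv (r : A → A → Prop) : A → A → Prop := fun a b => r b a

/-- The identity relation. -/
def rid : A → A → Prop := fun a b => a = b

/-- Reflexive-transitive closure. -/
def rstar (r : A → A → Prop) : A → A → Prop := Relation.ReflTransGen r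

/-- Transitive closure. -/
def rplus (r : A → A → Prop) : A → A → Prop := Relation.TransGen r

def RUnivalent (r : A → A → Prop) : Prop := rcomp (rconv r) r ≤ rid

def RInjective (r : A → A → Prop) : Prop := rcomp r (rconv r) ≤ rid

def RTotal (r : A → A → Prop) : Prop := rid ≤ rcomp r (rconv r)

def RSurjective (r : A → A → Prop) : Prop := rid ≤ rcomp (rconv r) r

def RMapping (r : A → A → Prop) : Prop := RUnivalent r ∧ RTotal r

def RVector (r : A → A → Prop) : Prop := rcomp r ⊤ = r

def RPoint (r : A → A → Prop) : Prop := RVector r ∧ RInjective r ∧ RSurjective r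

def RAcyclic (r : A → A → Prop) : Prop := rplus r ≤ ridᶜ

def RForest (p : A → A → Prop) : Prop := RMapping p ∧ RAcyclic (p ⊓ ridᶜ)

def RArc (r : A → A → Prop) : Prop := RPoint (rcomp r ⊤) ∧ RPoint (rcomp (rconv r) ⊤)

/-- Array write x[y↦z] = (y ⊓ zᵀ) ⊔ (yᶜ ⊓ x). -/
def rwrite (x y z : A → A → Prop) : A → A → Prop := (y ⊓ rconv z) ⊔ (yᶜ ⊓ x)

/-- Array read x[y] = xᵀ∘y. -/
def rread (x y : A → A → Prop) : A → A → Prop := rcomp (rconv x) y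

/-- Weakly-connected components: wcc(x) = (x ⊔ xᵀ)^*. -/
def wcc (x : A → A → Prop) : A → A → Prop := rstar (x ⊔ rconv x)

/-- Forest components: fc(x) = x^* ∘ (xᵀ)^*. -/
def fc (x : A → A → Prop) : A → A → Prop := rcomp (rstar x) (rstar (rconv x))

/-- The vector of roots of the forest p: roots(p) = (p ⊓ 1)∘⊤. -/
def rroots (p : A → A → Prop) : A → A → Prop := rcomp (p ⊓ rid) ⊤

/-- The root of x in p: root(p,x) = ((pᵀ)^*∘x) ⊓ roots(p). -/
def rroot (p x : A → A → Prop) : A → A → Prop := rcomp (rstar (rconv p)) x ⊓ rroots p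

/-! A point `x` is a single full row `{a} × A`, so `xᶜ ⊓ p` is `p` with the edges out of `a`
removed. A `p`-path from `a` can be cut at its last visit to `a`: what remains is one edge out
of `a` followed by a path that never leaves `a` again. -/

theorem Relation.ReflTransGen.cases_head_iff_avoiding {α : Type*} {p : α → α → Prop} {a b : α} :
    ReflTransGen p a b ↔ a = b ∨ ∃ c, p a c ∧ ReflTransGen (fun u v => u ≠ a ∧ p u v) c b := by
  constructor
  · intro hab
    induction hab with
    | refl => exact Or.inl rfl
    | @tail c d _ hcd ih =>
      by_cases hca : c = a
      · subst hca
        exact Or.inr ⟨d, hcd, .refl⟩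
      · rcases ih with rfl | ⟨e, hae, hec⟩
        · exact absurd rfl hca
        · exact Or.inr ⟨e, hae, hec.tail ⟨hca, hcd⟩⟩
  · rintro (rfl | ⟨c, hac, hcb⟩)
    · exact .refl
    · exact .head hac (ReflTransGen.mono (fun _ _ h => h.2) _ _ hcb)

theorem RVector.apply_of_apply {r : A → A → Prop} (hr : RVector r) {a b : A} (h : r a b) (c : A) :
    r a c := by
  rw [← hr]
  exact ⟨b, h, trivial⟩

theorem RVector.eq_row_of_injective {x : A → A → Prop} (hv : RVector x) (hi : RInjective x)
    {a b : A} (h : x a b) : x = fun u _ => u = a := by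
  funext u v
  apply propext
  constructor
  · intro hu
    exact hi u a ⟨b, hv.apply_of_apply hu b, h⟩
  · rintro rfl
    exact hv.apply_of_apply h v

theorem omit_redundant_points {A : Type*} (x p : A → A → Prop) (hx : RPoint x) :
    x ⊓ rstar p = (x ⊓ rid) ⊔ rcomp (x ⊓ p) (rstar (xᶜ ⊓ p)) := by
  obtain ⟨hv, hi, -⟩ := hx
  funext a b
  apply propext
  by_cases hrow : ∃ c, x a c
  · obtain ⟨c, hac⟩ := hrow
    rw [hv.eq_row_of_injective hi hac]
    simp only [rid, rcomp, rstar, Pi.inf_apply, Pi.sup_apply, inf_Prop_eq, sup_Prop_eq, true_and]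
    exact Relation.ReflTransGen.cases_head_iff_avoiding
  · rw [not_exists] at hrow
    simp [rcomp, hrow]
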